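/- Every local minimizer of the problem: minimize x^T A₀ x subject to x^T A₁ x ≤ 1 (A₀, A₁ symmetric n×n matrices) is a global minimizer. -/
import Mathlib

open Matrix

/-- The quadratic form `xᵀ A x` on Euclidean space. -/
noncomputable def quadForm {n : ℕ} (A : Matrix (Fin n) (Fin n) ℝ)
    (x : EuclideanSpace ℝ (Fin n)) : ℝ :=
  ∑ i, ∑ j, A i j * x i * x j

noncomputable def bil {n : ℕ} (A : Matrix (Fin n) (Fin n) ℝ)
    (x y : EuclideanSpace ℝ (Fin n)) : ℝ :=
  ∑ i, ∑ j, A i j * x i * y j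

lemma lim0 (a b δ : ℝ) (hδ : 0 < δ) (h : ∀ t, 0 < t → t < δ → 0 ≤ a + b * t) : 0 ≤ a := by
  by_contra ha
  push_neg at ha
  rcases le_or_gt b 0 with hb | hb
  · have := h (δ/2) (by linarith) (by linarith)
    nlinarith
  · have h1 : 0 < -a / (2*b) := div_pos (by linarith) (by linarith)
    have ht : 0 < min (δ/2) (-a/(2*b)) := lt_min (by linarith) h1
    have h2 := h _ ht (lt_of_le_of_lt (min_le_left _ _) (by linarith))
    have h3 : min (δ/2) (-a/(2*b)) ≤ -a/(2*b) := min_le_right _ _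
    have h4 : b * (min (δ/2) (-a/(2*b))) ≤ b * (-a/(2*b)) := by nlinarith
    have h5 : b * (-a/(2*b)) = -a/2 := by field_simp
    nlinarith

lemma lim1 (a b δ : ℝ) (hδ : 0 < δ) (h : ∀ t, 0 < t → t < δ → 0 ≤ a * t + b * t^2) : 0 ≤ a := by
  apply lim0 a |b| δ hδ
  intro t ht htδ
  have h1 := h t ht htδ
  have h2 : 0 ≤ a + b * t := by
    by_contra hc; push_neg at hc; nlinarith
  have h3 : b * t ≤ |b| * t := by
    have := le_abs_self b; nlinarith
  linarith

lemma lim2 (a b δ : ℝ) (hδ : 0 < δ) (h : ∀ t, 0 < t → t < δ → 0 ≤ a * t^2 + b * t^4) : 0 ≤ a := by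
  apply lim0 a |b| (min δ 1) (by positivity)
  intro t ht htδ
  have h1 := h t ht (lt_of_lt_of_le htδ (min_le_left _ _))
  have ht1 : t < 1 := lt_of_lt_of_le htδ (min_le_right _ _)
  have h2 : 0 ≤ a + b * t^2 := by
    by_contra hc; push_neg at hc; nlinarith [mul_pos ht ht]
  have h4 : t^2 ≤ t := by nlinarith
  have h5 : b*t^2 ≤ |b| * t^2 := by nlinarith [le_abs_self b, sq_nonneg t]
  have h6 : |b| * t^2 ≤ |b| * t := mul_le_mul_of_nonneg_left h4 (abs_nonneg b)
  linarith

lemma small_le (p q c : ℝ) (hc : 0 < c) :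
    ∃ δ, 0 < δ ∧ ∀ t, 0 < t → t < δ → p*t + q*t^2 ≤ c := by
  refine ⟨min 1 (c/(|p|+|q|+1)), lt_min one_pos (by positivity), fun t ht htδ => ?_⟩
  have h1 : t < 1 := lt_of_lt_of_le htδ (min_le_left _ _)
  have h2 : t < c/(|p|+|q|+1) := lt_of_lt_of_le htδ (min_le_right _ _)
  have h3 : t * (|p|+|q|+1) < c := by
    rw [div_eq_mul_inv] at h2
    have hpos : (0:ℝ) < |p|+|q|+1 := by positivity
    calc t * (|p|+|q|+1) < c * (|p|+|q|+1)⁻¹ * (|p|+|q|+1) := by nlinarith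
    _ = c := by field_simp
  have ht2 : t^2 ≤ t := by nlinarith
  have h5 : q*t^2 ≤ |q| * t := by nlinarith [le_abs_self q, sq_nonneg t, abs_nonneg q]
  have h6 : p*t ≤ |p| * t := by nlinarith [le_abs_self p]
  linarith

lemma small_le0 (p q : ℝ) (hp : p < 0) :
    ∃ δ, 0 < δ ∧ ∀ t, 0 < t → t < δ → p*t + q*t^2 ≤ 0 := by
  refine ⟨-p/(|q|+1), div_pos (by linarith) (by positivity), fun t ht htδ => ?_⟩
  have h3 : t * (|q|+1) < -p := by
    rw [div_eq_mul_inv] at htδ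
    have hpos : (0:ℝ) < |q|+1 := by positivity
    calc t * (|q|+1) < -p * (|q|+1)⁻¹ * (|q|+1) := by nlinarith
    _ = -p := by field_simp
  have h5 : q*t^2 ≤ (|q|+1) * t^2 := by nlinarith [le_abs_self q, sq_nonneg t]
  have h6 : (|q|+1) * t^2 < -p * t := by nlinarith [mul_pos ht ht]
  nlinarith

section Alg
variable {n : ℕ} (A : Matrix (Fin n) (Fin n) ℝ)

lemma quad_eq_bil (x : EuclideanSpace ℝ (Fin n)) : quadForm A x = bil A x x := rfl

lemma bil_symm (hA : Aᵀ = A) (x y : EuclideanSpace ℝ (Fin n)) : bil A x y = bil A y x := by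
  unfold bil
  rw [Finset.sum_comm]
  refine Finset.sum_congr rfl fun i _ => Finset.sum_congr rfl fun j _ => ?_
  have h : A j i = A i j := by
    conv_lhs => rw [← hA, Matrix.transpose_apply]
  rw [h]; ring

lemma quad_comb (a b : ℝ) (x y : EuclideanSpace ℝ (Fin n)) :
    quadForm A (a • x + b • y) =
      a^2 * quadForm A x + a*b*(bil A x y + bil A y x) + b^2 * quadForm A y := by
  unfold quadForm bil
  have key : ∀ i j : Fin n, A i j * (a • x + b • y) i * (a • x + b • y) j =
      a^2*(A i j * x i * x j) + (a*b*(A i j * x i * y j) +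
      (a*b*(A i j * y i * x j) + b^2*(A i j * y i * y j))) := by
    intro i j
    have hi : (a • x + b • y) i = a * x i + b * y i := rfl
    have hj : (a • x + b • y) j = a * x j + b * y j := rfl
    rw [hi, hj]; ring
  calc ∑ i, ∑ j, A i j * (a • x + b • y) i * (a • x + b • y) j
      = ∑ i, ∑ j, (a^2*(A i j * x i * x j) + (a*b*(A i j * x i * y j) +
        (a*b*(A i j * y i * x j) + b^2*(A i j * y i * y j)))) :=
        Finset.sum_congr rfl fun i _ => Finset.sum_congr rfl fun j _ => key i j
    _ = _ := by
        simp only [Finset.sum_add_distrib, ← Finset.mul_sum]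
        ring

lemma bil_add_right (x y z : EuclideanSpace ℝ (Fin n)) :
    bil A x (y + z) = bil A x y + bil A x z := by
  unfold bil
  rw [← Finset.sum_add_distrib]
  refine Finset.sum_congr rfl fun i _ => ?_
  rw [← Finset.sum_add_distrib]
  refine Finset.sum_congr rfl fun j _ => ?_
  have h : (y + z) j = y j + z j := rfl
  rw [h]; ring

lemma bil_smul_right (a : ℝ) (x y : EuclideanSpace ℝ (Fin n)) :
    bil A x (a • y) = a * bil A x y := by
  unfold bil
  rw [Finset.mul_sum]
  refine Finset.sum_congr rfl fun i _ => ?_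
  rw [Finset.mul_sum]
  refine Finset.sum_congr rfl fun j _ => ?_
  have h : (a • y) j = a * y j := rfl
  rw [h]; ring

lemma quad_smul (a : ℝ) (x : EuclideanSpace ℝ (Fin n)) :
    quadForm A (a • x) = a^2 * quadForm A x := by
  unfold quadForm
  rw [Finset.mul_sum]
  refine Finset.sum_congr rfl fun i _ => ?_
  rw [Finset.mul_sum]
  refine Finset.sum_congr rfl fun j _ => ?_
  have hi : (a • x) i = a * x i := rfl
  have hj : (a • x) j = a * x j := rfl
  rw [hi, hj]; ring

lemma comb_sub (a b : ℝ) (x y : EuclideanSpace ℝ (Fin n)) :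
    a • x + b • y - x = (a-1) • x + b • y := by
  rw [sub_smul, one_smul]; abel

end Alg

set_option maxHeartbeats 1600000 in
theorem stmt6 {n : ℕ} (A₀ A₁ : Matrix (Fin n) (Fin n) ℝ) (h0 : A₀ᵀ = A₀) (h1 : A₁ᵀ = A₁)
    (xs : EuclideanSpace ℝ (Fin n)) (hfeas : quadForm A₁ xs ≤ 1)
    (hloc : ∃ ε > 0, ∀ x : EuclideanSpace ℝ (Fin n),
      quadForm A₁ x ≤ 1 → ‖x - xs‖ < ε → quadForm A₀ xs ≤ quadForm A₀ x) :
    ∀ x : EuclideanSpace ℝ (Fin n), quadForm A₁ x ≤ 1 → quadForm A₀ xs ≤ quadForm A₀ x := by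
  obtain ⟨ε, hε, hloc⟩ := hloc
  intro x hx
  -- master lemma: straight-line growth condition
  have grow : ∀ d : EuclideanSpace ℝ (Fin n), ∀ δ : ℝ, 0 < δ →
      (∀ t : ℝ, 0 < t → t < δ → quadForm A₁ ((1:ℝ) • xs + t • d) ≤ 1) →
      ∃ δ', 0 < δ' ∧ ∀ t : ℝ, 0 < t → t < δ' →
        0 ≤ (2 * bil A₀ xs d) * t + quadForm A₀ d * t^2 := by
    intro d δ hδ hfe
    refine ⟨min δ (ε/(‖d‖+1)), lt_min hδ (by positivity), fun t ht htm => ?_⟩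
    have htδ : t < δ := lt_of_lt_of_le htm (min_le_left _ _)
    have hte : t < ε/(‖d‖+1) := lt_of_lt_of_le htm (min_le_right _ _)
    have hfy : quadForm A₁ ((1:ℝ)•xs + t•d) ≤ 1 := hfe t ht htδ
    have hny : ‖((1:ℝ)•xs + t•d) - xs‖ < ε := by
      rw [one_smul, add_sub_cancel_left, norm_smul, Real.norm_eq_abs, abs_of_pos ht]
      have hpos : (0:ℝ) < ‖d‖+1 := by positivity
      have h4 : t * (‖d‖+1) < ε := (lt_div_iff₀ hpos).mp hte
      nlinarith
    have h3 := hloc _ hfy hny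
    rw [quad_comb A₀ 1 t xs d] at h3
    have hs := bil_symm A₀ h0 xs d
    nlinarith [h3]
  -- Step A : quadForm A₀ xs ≤ 0
  have hshrink : quadForm A₀ xs ≤ 0 := by
    have hfe1 : ∀ t : ℝ, 0 < t → t < 1 → quadForm A₁ ((1:ℝ) • xs + t • ((-1:ℝ)•xs)) ≤ 1 := by
      intro t ht htδ
      have hb1 : bil A₁ xs ((-1:ℝ)•xs) = -quadForm A₁ xs := by
        rw [bil_smul_right, ← quad_eq_bil]; ring
      have hb2 : bil A₁ ((-1:ℝ)•xs) xs = -quadForm A₁ xs := by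
        rw [bil_symm A₁ h1, hb1]
      have hq : quadForm A₁ ((-1:ℝ)•xs) = quadForm A₁ xs := by
        rw [quad_smul]; ring
      rw [quad_comb A₁ 1 t xs ((-1:ℝ)•xs), hb1, hb2, hq]
      nlinarith [hfeas, sq_nonneg (1-t), mul_nonneg (sq_nonneg (1-t)) (sub_nonneg.mpr hfeas)]
    obtain ⟨δ', hδ', hg⟩ := grow ((-1:ℝ)•xs) 1 one_pos hfe1
    have hl := lim1 _ _ _ hδ' hg
    rw [bil_smul_right, ← quad_eq_bil] at hl
    linarith
  rcases lt_or_eq_of_le hfeas with hin | hbd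
  · -- interior case
    have hG : ∀ d : EuclideanSpace ℝ (Fin n), ∃ δ', 0 < δ' ∧ ∀ t : ℝ, 0 < t → t < δ' →
        0 ≤ (2 * bil A₀ xs d) * t + quadForm A₀ d * t^2 := by
      intro d
      obtain ⟨δ, hδ, hfe⟩ := small_le (2 * bil A₁ xs d) (quadForm A₁ d)
        (1 - quadForm A₁ xs) (by linarith)
      refine grow d δ hδ ?_
      intro t ht htδ
      rw [quad_comb A₁ 1 t xs d]
      have hs := bil_symm A₁ h1 xs d
      have hb := hfe t ht htδ
      nlinarith
    have hB0 : ∀ d, 0 ≤ bil A₀ xs d := by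
      intro d
      obtain ⟨δ', hδ', hg⟩ := hG d
      have := lim1 _ _ _ hδ' hg
      linarith
    have hB0' : ∀ d, bil A₀ xs d = 0 := by
      intro d
      have hpos := hB0 d
      have hneg := hB0 ((-1:ℝ)•d)
      rw [bil_smul_right] at hneg
      linarith
    have hq0 : ∀ d, 0 ≤ quadForm A₀ d := by
      intro d
      obtain ⟨δ', hδ', hg⟩ := hG d
      have h2 := hg (δ'/2) (by linarith) (by linarith)
      rw [hB0' d] at h2
      have hp : (0:ℝ) < δ'/2 := by linarith
      nlinarith [mul_pos hp hp]
    linarith [hq0 x]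
  · -- boundary case : quadForm A₁ xs = 1
    have hbd' : quadForm A₁ xs = 1 := hbd.symm ▸ hbd
    have hstrict : ∀ d, bil A₁ xs d < 0 → 0 ≤ bil A₀ xs d := by
      intro d hd
      obtain ⟨δ, hδ, hfe⟩ := small_le0 (2 * bil A₁ xs d) (quadForm A₁ d) (by linarith)
      have hfe1 : ∀ t : ℝ, 0 < t → t < δ → quadForm A₁ ((1:ℝ) • xs + t • d) ≤ 1 := by
        intro t ht htδ
        rw [quad_comb A₁ 1 t xs d]
        have hs := bil_symm A₁ h1 xs d
        have hb := hfe t ht htδ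
        nlinarith [hbd]
      obtain ⟨δ', hδ', hg⟩ := grow d δ hδ hfe1
      have := lim1 _ _ _ hδ' hg
      linarith
    have hKKT : ∀ d, bil A₁ xs d ≤ 0 → 0 ≤ bil A₀ xs d := by
      intro d hd
      apply lim0 (bil A₀ xs d) (-quadForm A₀ xs) 1 one_pos
      intro s hs hs1
      have hd2 : bil A₁ xs (d + (-s)•xs) < 0 := by
        rw [bil_add_right, bil_smul_right, ← quad_eq_bil, hbd]
        nlinarith
      have h5 := hstrict _ hd2
      rw [bil_add_right, bil_smul_right, ← quad_eq_bil] at h5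
      nlinarith [h5]
    have hlin : ∀ d, bil A₀ xs d = quadForm A₀ xs * bil A₁ xs d := by
      intro d
      have he1 : bil A₁ xs (d + (-(bil A₁ xs d))•xs) = 0 := by
        rw [bil_add_right, bil_smul_right, ← quad_eq_bil, hbd]; ring
      have hp := hKKT _ (le_of_eq he1)
      have hq : bil A₁ xs ((-1:ℝ)•(d + (-(bil A₁ xs d))•xs)) ≤ 0 := by
        rw [bil_smul_right, he1]; norm_num
      have hm := hKKT _ hq
      rw [bil_smul_right] at hm
      have hz : bil A₀ xs (d + (-(bil A₁ xs d))•xs) = 0 := by linarith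
      rw [bil_add_right, bil_smul_right, ← quad_eq_bil] at hz
      linear_combination hz
    have hpsd : ∀ e, bil A₁ xs e = 0 →
        quadForm A₀ xs * quadForm A₁ e ≤ quadForm A₀ e := by
      intro e he
      have hB0e : bil A₀ xs e = 0 := by rw [hlin e, he, mul_zero]
      have hes : bil A₁ e xs = 0 := by rw [← bil_symm A₁ h1, he]
      have h0es : bil A₀ e xs = 0 := by rw [← bil_symm A₀ h0, hB0e]
      have key : ∀ η : ℝ, 0 < η → η < 1 →
          0 ≤ (quadForm A₀ e - quadForm A₀ xs * quadForm A₁ e) +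
            (-2*quadForm A₀ xs) * η := by
        intro η hη _
        set K := quadForm A₁ e / 2 + η with hK
        set δ1 := Real.sqrt (2*η) / (|K|+1) with hδ1
        have hδ1pos : 0 < δ1 := div_pos (Real.sqrt_pos.mpr (by linarith)) (by positivity)
        set M := |K| * ‖xs‖ + ‖e‖ + 1 with hM
        have hMpos : 0 < M := by positivity
        have hineq : ∀ t : ℝ, 0 < t → t < min δ1 (min 1 (ε/M)) →
            0 ≤ (quadForm A₀ e - 2*K*quadForm A₀ xs) * t^2 +
              (K^2*quadForm A₀ xs) * t^4 := by
          intro t ht htm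
          have ht1 : t < δ1 := lt_of_lt_of_le htm (min_le_left _ _)
          have ht2 : t < 1 :=
            lt_of_lt_of_le htm (le_trans (min_le_right _ _) (min_le_left _ _))
          have htε : t < ε/M :=
            lt_of_lt_of_le htm (le_trans (min_le_right _ _) (min_le_right _ _))
          have hsq : K^2*t^2 ≤ 2*η := by
            have h5 : t * (|K|+1) < Real.sqrt (2*η) := by
              have hKpos : (0:ℝ) < |K|+1 := by positivity
              have := (lt_div_iff₀ hKpos).mp ht1
              linarith
            have hs0 : 0 ≤ t * (|K|+1) := by positivity
            have hs1 := mul_self_lt_mul_self hs0 h5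
            have hs2 := Real.mul_self_sqrt (show (0:ℝ) ≤ 2*η by linarith)
            nlinarith [sq_abs K, abs_nonneg K, sq_nonneg t,
              mul_nonneg (sq_nonneg t) (abs_nonneg K)]
          have hfe : quadForm A₁ ((1-K*t^2) • xs + t • e) ≤ 1 := by
            rw [quad_comb A₁ (1-K*t^2) t xs e, he, hes, hbd']
            have hq1e : quadForm A₁ e = 2*K - 2*η := by rw [hK]; ring
            nlinarith [hsq, sq_nonneg t, hq1e]
          have hnorm : ‖((1-K*t^2) • xs + t • e) - xs‖ < ε := by
            rw [comb_sub]
            have h6 : ‖((1-K*t^2)-1)•xs + t•e‖ ≤ ‖((1-K*t^2)-1)•xs‖ + ‖t•e‖ :=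
              norm_add_le _ _
            rw [norm_smul, norm_smul, Real.norm_eq_abs, Real.norm_eq_abs] at h6
            have h7 : |1-K*t^2-1| = |K| * t^2 := by
              rw [show (1-K*t^2-1) = -(K*t^2) by ring, abs_neg, abs_mul,
                abs_of_nonneg (sq_nonneg t)]
            rw [h7, abs_of_pos ht] at h6
            have h8 : t*M < ε := (lt_div_iff₀ hMpos).mp htε
            have h9 : t^2 ≤ t := by nlinarith
            nlinarith [norm_nonneg xs, abs_nonneg K, norm_nonneg e,
              mul_nonneg (abs_nonneg K) (norm_nonneg xs)]
          have h3 := hloc _ hfe hnorm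
          rw [quad_comb A₀ (1-K*t^2) t xs e, hB0e, h0es] at h3
          nlinarith [h3]
        have h2 := lim2 _ _ _ (lt_min hδ1pos (lt_min one_pos (by positivity))) hineq
        rw [hK] at h2
        nlinarith [h2]
      have hfin := lim0 _ _ 1 one_pos key
      linarith
    -- final decomposition
    have he : bil A₁ xs (x + (-(bil A₁ xs x))•xs) = 0 := by
      rw [bil_add_right, bil_smul_right, ← quad_eq_bil, hbd]; ring
    have hB0e : bil A₀ xs (x + (-(bil A₁ xs x))•xs) = 0 := by
      rw [hlin _, he, mul_zero]
    have hxe : x = (bil A₁ xs x) • xs + (1:ℝ) • (x + (-(bil A₁ xs x))•xs) := by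
      rw [one_smul, neg_smul]; abel
    have hes' : bil A₁ (x + (-(bil A₁ xs x))•xs) xs = 0 := by
      rw [← bil_symm A₁ h1]; exact he
    have h0es' : bil A₀ (x + (-(bil A₁ xs x))•xs) xs = 0 := by
      rw [← bil_symm A₀ h0]; exact hB0e
    have hq0x : quadForm A₀ x =
        (bil A₁ xs x)^2 * quadForm A₀ xs + quadForm A₀ (x + (-(bil A₁ xs x))•xs) := by
      conv_lhs => rw [hxe]
      rw [quad_comb A₀, hB0e, h0es']
      ring
    have hq1x : quadForm A₁ x =
        (bil A₁ xs x)^2 + quadForm A₁ (x + (-(bil A₁ xs x))•xs) := by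
      conv_lhs => rw [hxe]
      rw [quad_comb A₁, he, hes', hbd']
      ring
    have hp := hpsd _ he
    rw [hq0x]
    rw [hq1x] at hx
    nlinarith [hshrink, sq_nonneg (bil A₁ xs x), hp]
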